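/- arXiv:math/0405525 — 4 statements merged into one kernel-verified Lean document; each statement's English description precedes it below -/
import Mathlib

section
/- Let (A_α) be a filtered direct system of coherent commutative rings such that the colimit A = colim_α A_α is flat as a module over each A_α. Then A is a coherent ring. -/
open TensorProduct

/-- A commutative ring is *coherent* if every finitely generated ideal is
finitely presented as a module. -/
def IsCoherentRing (A : Type*) [CommRing A] : Prop :=
  ∀ I : Ideal A, I.FG → Module.FinitePresentation A I

/-- Let `(Aᵢ)` be a filtered direct system of coherent commutative rings whose
colimit `A` (expressed by the canonical maps `g i : Aᵢ →+* A` being jointly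
surjective and identifying exactly the elements that are eventually identified)
is flat over each `Aᵢ`.  Then `A` is coherent. -/
theorem isCoherentRing_of_filtered_colimit
    {ι : Type*} [Preorder ι] [IsDirected ι (· ≤ ·)] [Nonempty ι]
    (A : ι → Type*) [∀ i, CommRing (A i)]
    (f : ∀ i j, i ≤ j → A i →+* A j)
    (hf_id : ∀ i (x : A i), f i i le_rfl x = x)
    (hf_comp : ∀ i j k (hij : i ≤ j) (hjk : j ≤ k) (x : A i),
      f j k hjk (f i j hij x) = f i k (hij.trans hjk) x)
    (B : Type*) [CommRing B] (g : ∀ i, A i →+* B)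
    (hg_compat : ∀ i j (hij : i ≤ j) (x : A i), g j (f i j hij x) = g i x)
    (hg_surj : ∀ b : B, ∃ i, ∃ x : A i, g i x = b)
    (hg_inj : ∀ i (x y : A i), g i x = g i y →
      ∃ j, ∃ hij : i ≤ j, f i j hij x = f i j hij y)
    (hflat : ∀ i, letI : Algebra (A i) B := (g i).toAlgebra; Module.Flat (A i) B)
    (hcoh : ∀ i, IsCoherentRing (A i)) :
    IsCoherentRing B := by
  intro I hI
  classical
  obtain ⟨s, hs⟩ := hI
  -- choose indices and lifts for the generators
  choose idx lift hlift using hg_surj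
  obtain ⟨i, hi⟩ := (s.image idx).exists_le
  have hi' : ∀ b ∈ s, idx b ≤ i := fun b hb => hi _ (Finset.mem_image_of_mem idx hb)
  -- lifts of the generators in `A i`
  let u : s → A i := fun b => f (idx b) i (hi' b b.2) (lift b)
  have hu : ∀ b : s, g i (u b) = (b : B) := fun b => by
    simp only [u, hg_compat, hlift]
  -- the ideal of `A i` generated by the lifts
  let J : Ideal (A i) := Ideal.span (Set.range u)
  have hJfg : J.FG := Submodule.fg_span (Set.finite_range u)
  have hJfp : Module.FinitePresentation (A i) J := hcoh i J hJfg
  letI : Algebra (A i) B := (g i).toAlgebra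
  haveI := hflat i
  haveI := hJfp
  have halg : ∀ x : A i, algebraMap (A i) B x = g i x := fun _ => rfl
  -- the base-changed inclusion `B ⊗[A i] J → B`
  let φ : (B ⊗[A i] J) →ₗ[B] B :=
    (TensorProduct.AlgebraTensorModule.rid (A i) B B).toLinearMap ∘ₗ
      (J.subtype.baseChange B)
  have hφinj : Function.Injective φ := by
    refine (TensorProduct.AlgebraTensorModule.rid (A i) B B).injective.comp ?_
    rw [LinearMap.baseChange_eq_ltensor J.subtype]
    exact Module.Flat.lTensor_preserves_injective_linearMap J.subtype J.injective_subtype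
  have hφtmul : ∀ (b : B) (x : J), φ (b ⊗ₜ x) = g i (x : A i) * b := by
    intro b x
    simp only [φ, LinearMap.coe_comp, Function.comp_apply, LinearMap.baseChange_tmul,
      Submodule.coe_subtype, LinearEquiv.coe_coe,
      TensorProduct.AlgebraTensorModule.rid_tmul]
    rw [Algebra.smul_def, halg]
  -- the image of `J` in `B` is `I`
  have hJI : ∀ x ∈ J, g i x ∈ I := by
    intro x hx
    have : Ideal.map (g i) J ≤ I := by
      rw [Ideal.map_span, Ideal.span_le, ← hs]
      rintro _ ⟨_, ⟨b, rfl⟩, rfl⟩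
      rw [hu b]
      exact Ideal.subset_span b.2
    exact this (Ideal.mem_map_of_mem (g i) hx)
  have hrange : LinearMap.range φ = (I : Submodule B B) := by
    apply le_antisymm
    · rintro _ ⟨x, rfl⟩
      induction x with
      | zero => simp only [map_zero]; exact I.zero_mem
      | tmul b x =>
          rw [hφtmul]
          exact I.mul_mem_right b (hJI _ x.2)
      | add x y hx hy => rw [map_add]; exact I.add_mem hx hy
    · rw [← hs, Ideal.span_le]
      intro b hb
      refine ⟨1 ⊗ₜ ⟨u ⟨b, hb⟩, Ideal.subset_span ⟨⟨b, hb⟩, rfl⟩⟩, ?_⟩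
      rw [hφtmul, hu ⟨b, hb⟩, mul_one]
  -- transport finite presentation along the isomorphism `B ⊗[A i] J ≃ I`
  let e : (B ⊗[A i] J) ≃ₗ[B] I :=
    (LinearEquiv.ofInjective φ hφinj).trans (LinearEquiv.ofEq _ _ hrange)
  exact Module.finitePresentation_of_surjective e.toLinearMap e.surjective
    (by rw [LinearEquiv.ker]; exact Submodule.fg_bot)
end

section
/- A countably generated polynomial ring A[x_1, x_2, ...] over a commutative Noetherian ring A is a coherent ring. -/
open TensorProduct MvPolynomial

theorem IsNoetherianRing.isCoherentRing (R : Type*) [CommRing R] [IsNoetherianRing R] :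
    IsCoherentRing R := fun I _ => Module.finitePresentation_of_finite R I

theorem Ideal.finitePresentation_map_of_flat {S R : Type*} [CommRing S] [CommRing R]
    [Algebra S R] [Module.Flat S R] (J : Ideal S) [Module.FinitePresentation S J] :
    Module.FinitePresentation R (J.map (algebraMap S R)) := by
  let φ : R ⊗[S] J →ₗ[R] R := (Algebra.linearMap S R ∘ₗ J.subtype).liftBaseChange R
  have hφ : φ = (AlgebraTensorModule.rid S R R).toLinearMap ∘ₗ J.subtype.baseChange R := by
    ext; simp [φ, Algebra.smul_def, mul_comm]
  have hinj : Function.Injective φ := by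
    rw [hφ, LinearMap.coe_comp, LinearMap.baseChange_eq_ltensor]
    exact (LinearEquiv.injective _).comp
      (Module.Flat.lTensor_preserves_injective_linearMap _ J.injective_subtype)
  have hrange : LinearMap.range φ = J.map (algebraMap S R) := by
    rw [LinearMap.range_liftBaseChange, LinearMap.range_comp, Submodule.range_subtype]
    rfl
  exact Module.FinitePresentation.of_equiv
    ((LinearEquiv.ofInjective φ hinj).trans (LinearEquiv.ofEq _ _ hrange))

theorem IsCoherentRing.of_forall_finset_subset_range_flat {R : Type*} [CommRing R]
    (h : ∀ s : Finset R, ∃ (S : Type*) (_ : CommRing S) (f : S →+* R),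
      f.Flat ∧ IsCoherentRing S ∧ (s : Set R) ⊆ Set.range f) :
    IsCoherentRing R := by
  classical
  rintro I ⟨s, rfl⟩
  obtain ⟨S, _, f, hf, hS, hs⟩ := h s
  algebraize [f]
  let J : Ideal S := Ideal.span (Function.invFun f '' s)
  have hJ : J.map (algebraMap S R) = Ideal.span s := by
    rw [Ideal.map_span, Set.image_image]
    exact congrArg _
      ((Set.image_congr fun x hx => Function.invFun_eq (hs hx)).trans (Set.image_id _))
  have : Module.FinitePresentation S J := hS J ⟨s.image (Function.invFun f), by simp [J]⟩
  rw [← hJ]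
  exact J.finitePresentation_map_of_flat

namespace MvPolynomial

theorem flat_rename_inr (R σ τ : Type*) [CommRing R] :
    (rename (Sum.inr : τ → σ ⊕ τ) : MvPolynomial τ R →ₐ[R] _).toRingHom.Flat := by
  have : (rename Sum.inr : MvPolynomial τ R →ₐ[R] _) =
      (sumAlgEquiv R σ τ).symm.toAlgHom.comp (IsScalarTower.toAlgHom R _ _) := by
    rw [← sumAlgEquiv_comp_rename_inr, ← AlgHom.comp_assoc]
    simp
  rw [this]
  exact RingHom.Flat.comp (RingHom.flat_algebraMap_iff.mpr inferInstance)
    (.of_bijective (sumAlgEquiv R σ τ).symm.bijective)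

theorem flat_rename_of_injective {R σ τ : Type*} [CommRing R] {f : τ → σ}
    (hf : Function.Injective f) : (rename f : MvPolynomial τ R →ₐ[R] _).toRingHom.Flat := by
  classical
  let e : ((Set.range f)ᶜ : Set σ) ⊕ τ ≃ σ := (Equiv.sumComm _ _).trans
    ((Equiv.sumCongr (Equiv.ofInjective f hf) (Equiv.refl _)).trans (Equiv.Set.sumCompl _))
  have : rename f = (renameEquiv R e).toAlgHom.comp (rename Sum.inr) := by
    ext; simp [e]
  rw [this]
  exact (flat_rename_inr R _ τ).comp (.of_bijective (renameEquiv R e).bijective)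

theorem exists_finset_subset_range_rename {R σ : Type*} [CommSemiring R]
    (s : Finset (MvPolynomial σ R)) :
    ∃ t : Finset σ, (s : Set (MvPolynomial σ R)) ⊆ Set.range (rename ((↑) : t → σ)) := by
  classical
  refine ⟨s.biUnion vars, fun p hp => ?_⟩
  refine exists_rename_eq_of_vars_subset_range p _ Subtype.val_injective ?_
  rw [Subtype.range_coe]
  exact Finset.coe_subset.mpr (Finset.subset_biUnion_of_mem vars hp)

end MvPolynomial

/-- A polynomial ring in countably many variables over a commutative
Noetherian ring is coherent. -/
theorem isCoherentRing_mvPolynomial_countable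
    (A : Type*) [CommRing A] [IsNoetherianRing A] :
    IsCoherentRing (MvPolynomial ℕ A) := by
  refine IsCoherentRing.of_forall_finset_subset_range_flat fun s => ?_
  obtain ⟨t, ht⟩ := exists_finset_subset_range_rename s
  exact ⟨MvPolynomial t A, inferInstance, _, flat_rename_of_injective Subtype.val_injective,
    IsNoetherianRing.isCoherentRing _, ht⟩
end

section
/- Let A ⊆ B be an extension of commutative rings such that B is a finite A-algebra (finitely generated as an A-module). If B is Noetherian, then A is Noetherian. -/
/-!
Formanek's argument. Let `M` be a finitely generated `A`-module. Among the submodules `N` with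
`ann (M ⧸ N) = ann M` there is a maximal one, since each `a • M` is finitely generated, hence
compact in the submodule lattice. Suppose `M ⧸ I • M` is Noetherian whenever `I • M ≠ 0`. Every
`N' > N` then contains some `a • M ≠ 0`, so `N'` is finitely generated and `M ⧸ N` is Noetherian;
as `A ⧸ ann M = A ⧸ ann (M ⧸ N)` embeds in a power of `M ⧸ N`, `M` is Noetherian.

Under the ascending chain condition on the `I • M`, choose `I₀ • M` maximal with `M ⧸ I₀ • M` not
Noetherian; the above, applied to `M ⧸ I₀ • M`, gives a contradiction. When `M = B` is a finite
`A`-algebra, `I • B` is an ideal of `B`, so this chain condition holds as soon as `B` is Noetherian.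
-/

open Submodule

section Ring

variable {R M : Type*} [Ring R] [AddCommGroup M] [Module R M]

theorem Submodule.fg_of_le_of_isNoetherian_quotient {P N : Submodule R M} (hP : P.FG)
    [IsNoetherian R (M ⧸ P)] (hPN : P ≤ N) : N.FG :=
  fg_of_fg_map_of_fg_inf_ker P.mkQ (IsNoetherian.noetherian _)
    (by rwa [ker_mkQ, inf_eq_right.2 hPN])

theorem isNoetherian_quotient_of_forall_lt_fg {N : Submodule R M}
    (h : ∀ N', N < N' → N'.FG) : IsNoetherian R (M ⧸ N) := by
  refine ⟨fun L ↦ ?_⟩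
  rcases eq_or_ne L ⊥ with rfl | hL
  · exact fg_bot
  have hN : N < L.comap N.mkQ := by
    refine lt_of_le_of_ne (fun x hx ↦ ?_) fun hN ↦ hL ?_
    · simp [(Quotient.mk_eq_zero N).2 hx]
    · rw [← map_comap_eq_of_surjective N.mkQ_surjective L, ← hN, mkQ_map_self]
  simpa only [map_comap_eq_of_surjective N.mkQ_surjective] using (h _ hN).map N.mkQ

end Ring

section CommRing

variable {A M : Type*} [CommRing A] [AddCommGroup M] [Module A M]

theorem Submodule.annihilator_quotient_bot :
    Module.annihilator A (M ⧸ (⊥ : Submodule A M)) = Module.annihilator A M := by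
  rw [annihilator_quotient, bot_colon', span_univ, annihilator_top]

theorem Submodule.mem_annihilator_quotient_iff {N : Submodule A M} {a : A} :
    a ∈ Module.annihilator A (M ⧸ N) ↔ Ideal.span {a} • (⊤ : Submodule A M) ≤ N := by
  rw [annihilator_quotient, ← top_coe (R := A) (M := M), mem_colon_iff_le,
    ideal_span_singleton_smul]

theorem Submodule.smul_top_quotient (I : Ideal A) (N : Submodule A M) :
    I • (⊤ : Submodule A (M ⧸ N)) = (I • ⊤ : Submodule A M).map N.mkQ := by
  rw [map_smul'', map_top, range_mkQ]

theorem isNoetherian_quotient_annihilator [Module.Finite A M] [IsNoetherian A M] :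
    IsNoetherian A (A ⧸ Module.annihilator A M) := by
  obtain ⟨s, hs⟩ := Module.Finite.fg_top (R := A) (M := M)
  let f : A →ₗ[A] (s → M) := LinearMap.pi fun x ↦ LinearMap.toSpanSingleton A M x
  have hf : LinearMap.ker f = Module.annihilator A M := by
    rw [LinearMap.ker_pi, ← annihilator_top, ← hs, annihilator_span]
    rfl
  exact hf ▸ isNoetherian_of_linearEquiv f.quotKerEquivRange.symm

theorem isNoetherian_of_le_annihilator [Module.Finite A M] {I : Ideal A}
    [IsNoetherian A (A ⧸ I)] (hI : I ≤ Module.annihilator A M) : IsNoetherian A M := by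
  obtain ⟨n, f, hf⟩ := Module.Finite.exists_fin' A M
  let P : Submodule A (Fin n → A) := pi Set.univ fun _ ↦ I
  have hP : P ≤ LinearMap.ker f := fun x hx ↦ by
    rw [LinearMap.mem_ker, LinearMap.pi_apply_eq_sum_univ f x]
    exact Finset.sum_eq_zero fun i _ ↦
      Module.mem_annihilator.1 (hI ((mem_pi.1 hx) i (Set.mem_univ i))) _
  have : IsNoetherian A ((Fin n → A) ⧸ P) :=
    isNoetherian_of_linearEquiv (quotientPi fun _ ↦ I).symm
  exact isNoetherian_of_surjective (P.liftQ f hP) (by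
    rw [range_liftQ, LinearMap.range_eq_top.2 hf])

theorem isNoetherian_of_annihilator_quotient_le [Module.Finite A M] {N : Submodule A M}
    [IsNoetherian A (M ⧸ N)] (hN : Module.annihilator A (M ⧸ N) ≤ Module.annihilator A M) :
    IsNoetherian A M :=
  have := isNoetherian_quotient_annihilator (A := A) (M := M ⧸ N)
  isNoetherian_of_le_annihilator hN

theorem exists_maximal_annihilator_quotient_le [Module.Finite A M] :
    ∃ N : Submodule A M,
      Maximal (fun N ↦ Module.annihilator A (M ⧸ N) ≤ Module.annihilator A M) N := by
  refine zorn_le₀ _ fun c hc hchain ↦ ?_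
  rcases c.eq_empty_or_nonempty with rfl | hne
  · exact ⟨⊥, annihilator_quotient_bot.le, fun _ h ↦ h.elim⟩
  refine ⟨sSup c, fun a ha ↦ ?_, fun _ ↦ le_sSup⟩
  rw [mem_annihilator_quotient_iff] at ha
  have hcompact : IsCompactElement (Ideal.span {a} • (⊤ : Submodule A M)) :=
    (fg_iff_compact _).1 (FG.smul (fg_span_singleton a) Module.Finite.fg_top)
  obtain ⟨N, hNc, hN⟩ :=
    (CompleteLattice.isCompactElement_iff_le_of_directed_sSup_le _ _).1 hcompact c hne
      hchain.directedOn ha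
  exact hc hNc (mem_annihilator_quotient_iff.2 hN)

theorem isNoetherian_of_forall_isNoetherian_quotient_smul_top [Module.Finite A M]
    (h : ∀ I : Ideal A, I • (⊤ : Submodule A M) ≠ ⊥ →
      IsNoetherian A (M ⧸ I • (⊤ : Submodule A M))) :
    IsNoetherian A M := by
  obtain ⟨N, hN⟩ := exists_maximal_annihilator_quotient_le (A := A) (M := M)
  have : IsNoetherian A (M ⧸ N) := isNoetherian_quotient_of_forall_lt_fg fun N' hNN' ↦ by
    obtain ⟨a, ha', ha⟩ := SetLike.not_le_iff_exists.1 fun h' ↦ hN.not_gt h' hNN'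
    have hne : Ideal.span {a} • (⊤ : Submodule A M) ≠ ⊥ := fun hbot ↦
      ha (annihilator_quotient_bot (A := A) (M := M) ▸ mem_annihilator_quotient_iff.2 hbot.le)
    have := h _ hne
    exact fg_of_le_of_isNoetherian_quotient
      (FG.smul (fg_span_singleton a) (Module.Finite.fg_top (R := A) (M := M)))
      (mem_annihilator_quotient_iff.1 ha')
  exact isNoetherian_of_annihilator_quotient_le hN.prop

theorem isNoetherian_of_wellFounded_smul_top [Module.Finite A M]
    (h : WellFounded (InvImage (· > ·) fun I : Ideal A ↦ I • (⊤ : Submodule A M))) :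
    IsNoetherian A M := by
  by_contra hM
  obtain ⟨I₀, hI₀, hmax⟩ := h.has_min {I | ¬ IsNoetherian A (M ⧸ I • (⊤ : Submodule A M))}
    ⟨⊥, fun h ↦ hM (isNoetherian_of_linearEquiv (quotEquivOfEqBot _ (bot_smul (A := A) ⊤)))⟩
  refine hI₀ (isNoetherian_of_forall_isNoetherian_quotient_smul_top fun I hI ↦ ?_)
  have hlt : I₀ • (⊤ : Submodule A M) < I₀ • ⊤ ⊔ I • ⊤ := left_lt_sup.2 fun hle ↦ hI <| by
    rw [smul_top_quotient, eq_bot_iff, map_le_iff_le_comap, comap_bot, ker_mkQ]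
    exact hle
  have : IsNoetherian A (M ⧸ I₀ • (⊤ : Submodule A M) ⊔ I • ⊤) := by
    by_contra hI
    exact hmax (I₀ ⊔ I) (by rwa [Set.mem_ofPred_eq, sup_smul])
      (show I₀ • ⊤ < (I₀ ⊔ I) • ⊤ by rwa [sup_smul])
  rw [smul_top_quotient]
  exact isNoetherian_of_linearEquiv (quotientQuotientEquivQuotientSup _ _).symm

theorem isNoetherian_of_finite_of_isNoetherianRing {B : Type*} [CommRing B] [Algebra A B]
    [Module.Finite A B] [IsNoetherianRing B] : IsNoetherian A B := by
  refine isNoetherian_of_wellFounded_smul_top ?_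
  simp only [Ideal.smul_top_eq_map]
  exact InvImage.wf (fun I : Ideal A ↦ I.map (algebraMap A B)) wellFounded_gt

end CommRing

/-- Eakin–Nagata theorem: if `A ⊆ B` is an extension of commutative rings with
`B` finitely generated as an `A`-module, and `B` is Noetherian, then `A` is
Noetherian. -/
theorem isNoetherianRing_of_module_finite_extension
    {B : Type*} [CommRing B] (A : Subring B)
    [Module.Finite A B] [IsNoetherianRing B] :
    IsNoetherianRing A :=
  have := isNoetherian_of_finite_of_isNoetherianRing (A := A) (B := B)
  isNoetherian_of_injective (Algebra.linearMap A B) Subtype.val_injective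
end

section
/- Let A_* be a graded commutative ring and M_*, N_* graded A_*-modules with M_* ⊗_{A_*} N_* ≅ A_*, such that A_* is concentrated in nonnegative degrees, M_n = 0 for n < j and N_n = 0 for n < -j for some integer j with M_j ≠ 0. Then M_j ⊗_{A_0} N_{-j} ≅ A_0 as A_0-modules, so M_j is an invertible A_0-module. -/
open TensorProduct

section GradeZeroModule

variable {R M σ τ : Type*} [CommRing R] [AddCommGroup M] [Module R M]
  [SetLike σ R] [AddSubgroupClass σ R] [SetLike τ M] [AddSubgroupClass τ M]
  (𝒜 : ℤ → σ) (ℳ : ℤ → τ) [SetLike.GradedMonoid 𝒜] [SetLike.GradedSMul 𝒜 ℳ]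

/-- The degree-`i` component of a graded module is a module over the
degree-zero part of the graded ring. -/
def gradeZeroSMul (i : ℤ) : SMul (𝒜 0) (ℳ i) :=
  ⟨fun a x => ⟨(a : R) • (x : M), by
    have h := SetLike.GradedSMul.smul_mem a.2 x.2
    rwa [vadd_eq_add, zero_add] at h⟩⟩

/-- The degree-`i` component of a graded module as a module over the
degree-zero part of the graded ring. -/
def gradeZeroModule (i : ℤ) : Module (𝒜 0) (ℳ i) :=
  letI := gradeZeroSMul 𝒜 ℳ i
  { smul := (· • ·)
    one_smul := fun x => Subtype.ext (one_smul R (x : M))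
    mul_smul := fun a b x => Subtype.ext (mul_smul (a : R) (b : R) (x : M))
    smul_zero := fun a => Subtype.ext (smul_zero (a : R))
    smul_add := fun a x y => Subtype.ext (smul_add (a : R) (x : M) (y : M))
    add_smul := fun a b x => Subtype.ext (add_smul (a : R) (b : R) (x : M))
    zero_smul := fun x => Subtype.ext (zero_smul R (x : M)) }

end GradeZeroModule

open DirectSum in
lemma decompose_bilin_aux {X Y Z : Type*} [AddCommGroup X] [AddCommGroup Y] [AddCommGroup Z]
    (𝒳 : ℤ → AddSubgroup X) (𝒴 : ℤ → AddSubgroup Y) (𝒵 : ℤ → AddSubgroup Z)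
    [DirectSum.Decomposition 𝒳] [DirectSum.Decomposition 𝒴] [DirectSum.Decomposition 𝒵]
    (b : X →+ Y →+ Z) (α β : ℤ)
    (hX : ∀ p : ℤ, p < α → 𝒳 p = ⊥) (hY : ∀ q : ℤ, q < β → 𝒴 q = ⊥)
    (hb : ∀ (p q : ℤ) (x : X) (y : Y), x ∈ 𝒳 p → y ∈ 𝒴 q → b x y ∈ 𝒵 (p + q))
    (x : X) (y : Y) :
    (DirectSum.decompose 𝒵 (b x y) (α + β) : Z)
      = b (DirectSum.decompose 𝒳 x α : X) (DirectSum.decompose 𝒴 y β : Y) := by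
  classical
  have hbotX : ∀ p : ℤ, p < α → (DirectSum.decompose 𝒳 x p : X) = 0 := by
    intro p hp
    exact (AddSubgroup.eq_bot_iff_forall _).mp (hX p hp) _ (SetLike.coe_mem _)
  have hbotY : ∀ q : ℤ, q < β → (DirectSum.decompose 𝒴 y q : Y) = 0 := by
    intro q hq
    exact (AddSubgroup.eq_bot_iff_forall _).mp (hY q hq) _ (SetLike.coe_mem _)
  have hsum : ∀ (s : Finset ℤ) (f : ℤ → Z),
      (DirectSum.decompose 𝒵 (∑ i ∈ s, f i) (α + β) : Z)
        = ∑ i ∈ s, (DirectSum.decompose 𝒵 (f i) (α + β) : Z) := by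
    intro s f
    induction s using Finset.induction_on with
    | empty => simp
    | insert _ _ h ih =>
      rw [Finset.sum_insert h, Finset.sum_insert h, DirectSum.decompose_add,
        DirectSum.add_apply, AddSubgroup.coe_add, ih]
  have hxy : b x y = ∑ p ∈ (DirectSum.decompose 𝒳 x).support,
      ∑ q ∈ (DirectSum.decompose 𝒴 y).support,
        b (DirectSum.decompose 𝒳 x p : X) (DirectSum.decompose 𝒴 y q : Y) := by
    conv_lhs => rw [← DirectSum.sum_support_decompose 𝒳 x,
      ← DirectSum.sum_support_decompose 𝒴 y]
    simp only [map_sum, AddMonoidHom.finset_sum_apply]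
    exact Finset.sum_comm
  rw [hxy, hsum, Finset.sum_congr rfl fun p _ => hsum _ _]
  have hterm : ∀ p q : ℤ,
      (DirectSum.decompose 𝒵 (b (DirectSum.decompose 𝒳 x p : X)
          (DirectSum.decompose 𝒴 y q : Y)) (α + β) : Z)
        = if p = α ∧ q = β then
            b (DirectSum.decompose 𝒳 x α : X) (DirectSum.decompose 𝒴 y β : Y) else 0 := by
    intro p q
    rcases lt_trichotomy p α with hp | hp | hp
    · rw [hbotX p hp]
      simp [hp.ne]
    · subst hp
      rcases lt_trichotomy q β with hq | hq | hq
      · rw [hbotY q hq]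
        simp [hq.ne]
      · subst hq; simp [DirectSum.decompose_of_mem_same 𝒵
          (hb _ _ _ _ (SetLike.coe_mem _) (SetLike.coe_mem _))]
      · rw [DirectSum.decompose_of_mem_ne 𝒵
          (hb _ _ _ _ (SetLike.coe_mem _) (SetLike.coe_mem _))
          (by omega : p + q ≠ p + β)]
        simp [hq.ne']
    · rcases lt_or_ge q β with hq | hq
      · rw [hbotY q hq]
        simp [hp.ne', hq.ne]
      · rw [DirectSum.decompose_of_mem_ne 𝒵
          (hb _ _ _ _ (SetLike.coe_mem _) (SetLike.coe_mem _))
          (by omega : p + q ≠ α + β)]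
        simp [hp.ne']
  rw [Finset.sum_congr rfl fun p _ => Finset.sum_congr rfl fun q _ => hterm p q]
  by_cases hα : α ∈ (DirectSum.decompose 𝒳 x).support
  · by_cases hβ : β ∈ (DirectSum.decompose 𝒴 y).support
    · rw [Finset.sum_eq_single α]
      · rw [Finset.sum_eq_single β]
        · simp
        · intro q _ hq; simp [hq]
        · intro h; exact absurd hβ h
      · intro p _ hp
        exact Finset.sum_eq_zero fun q _ => by simp [hp]
      · intro h; exact absurd hα h
    · have : (DirectSum.decompose 𝒴 y β : Y) = 0 := by
        have := DFinsupp.notMem_support_iff.mp hβ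
        rw [this]; rfl
      rw [this, map_zero]
      exact Finset.sum_eq_zero fun p _ => Finset.sum_eq_zero fun q _ => by
        by_cases h : p = α ∧ q = β
        · rcases h with ⟨h1, h2⟩; subst h1; subst h2; simp [this]
        · simp [h]
  · have : (DirectSum.decompose 𝒳 x α : X) = 0 := by
      have := DFinsupp.notMem_support_iff.mp hα
      rw [this]; rfl
    rw [this, map_zero, AddMonoidHom.zero_apply]
    exact Finset.sum_eq_zero fun p _ => Finset.sum_eq_zero fun q _ => by
      by_cases h : p = α ∧ q = β
      · rcases h with ⟨h1, h2⟩; subst h1; subst h2; simp [this]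
      · simp [h]


set_option maxHeartbeats 2000000 in
/-- Let `A_*` be a connective graded commutative ring and `M_*`, `N_*` graded
modules with a graded pairing inducing an isomorphism `M ⊗[A] N ≅ A`, such that
`M_n = 0` for `n < j`, `N_n = 0` for `n < -j` and `M_j ≠ 0`.  Then
`M_j ⊗[A_0] N_{-j} ≅ A_0`; in particular `M_j` is an invertible
`A_0`-module. -/
theorem gradeZero_tensor_equiv_of_graded_invertible
    {R M N : Type*} [CommRing R] [AddCommGroup M] [AddCommGroup N]
    [Module R M] [Module R N]
    (𝒜 : ℤ → AddSubgroup R) [GradedRing 𝒜]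
    (hconn : ∀ n : ℤ, n < 0 → 𝒜 n = ⊥)
    (ℳ : ℤ → AddSubgroup M) [DirectSum.Decomposition ℳ] [SetLike.GradedSMul 𝒜 ℳ]
    (𝒩 : ℤ → AddSubgroup N) [DirectSum.Decomposition 𝒩] [SetLike.GradedSMul 𝒜 𝒩]
    (j : ℤ)
    (hM : ∀ n : ℤ, n < j → ℳ n = ⊥) (hN : ∀ n : ℤ, n < -j → 𝒩 n = ⊥)
    (hMj : ℳ j ≠ ⊥)
    (φ : M →ₗ[R] N →ₗ[R] R)
    (hφ : Function.Bijective (TensorProduct.lift φ : M ⊗[R] N →ₗ[R] R))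
    (hgraded : ∀ (i k : ℤ) (x : M) (y : N), x ∈ ℳ i → y ∈ 𝒩 k →
      φ x y ∈ 𝒜 (i + k)) :
    letI := gradeZeroModule 𝒜 ℳ j
    letI := gradeZeroModule 𝒜 𝒩 (-j)
    Nonempty ((ℳ j) ⊗[(𝒜 0)] (𝒩 (-j)) ≃ₗ[(𝒜 0)] (𝒜 0)) := by
  classical
  letI := gradeZeroModule 𝒜 ℳ j
  letI := gradeZeroModule 𝒜 𝒩 (-j)
  -- the degree-zero pairing
  have hmem : ∀ (u : ℳ j) (v : 𝒩 (-j)), φ u v ∈ 𝒜 0 := fun u v => by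
    have h := hgraded j (-j) u v u.2 v.2
    rwa [add_neg_cancel] at h
  let ψ₀ : (ℳ j) →ₗ[𝒜 0] (𝒩 (-j)) →ₗ[𝒜 0] (𝒜 0) :=
    { toFun := fun u =>
        { toFun := fun v => ⟨φ u v, hmem u v⟩
          map_add' := fun v w => Subtype.ext (by
            show φ (u : M) (((v + w : 𝒩 (-j))) : N) = φ (u : M) (v : N) + φ (u : M) (w : N)
            rw [AddSubgroup.coe_add, map_add])
          map_smul' := fun a v => Subtype.ext (by
            show φ u ((a : R) • (v : N)) = ((a • (⟨φ u v, hmem u v⟩ : 𝒜 0) : 𝒜 0) : R)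
            rw [map_smul, smul_eq_mul]
            rfl) }
      map_add' := fun u w => LinearMap.ext fun v => Subtype.ext (by
        show φ ((u : M) + (w : M)) (v : N) = φ (u : M) (v : N) + φ (w : M) (v : N)
        rw [map_add, LinearMap.add_apply])
      map_smul' := fun a u => LinearMap.ext fun v => Subtype.ext (by
        show φ ((a : R) • (u : M)) (v : N) = ((a • (⟨φ u v, hmem u v⟩ : 𝒜 0) : 𝒜 0) : R)
        rw [map_smul, LinearMap.smul_apply, smul_eq_mul]
        rfl) }
  let ψ : (ℳ j) ⊗[𝒜 0] (𝒩 (-j)) →ₗ[𝒜 0] (𝒜 0) := TensorProduct.lift ψ₀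
  have ψ_tmul : ∀ (u : ℳ j) (v : 𝒩 (-j)), ((ψ (u ⊗ₜ v) : 𝒜 0) : R) = φ u v :=
    fun u v => rfl
  -- the canonical additive map to the big tensor product
  let κ : (ℳ j) ⊗[𝒜 0] (𝒩 (-j)) →+ M ⊗[R] N :=
    TensorProduct.liftAddHom
      (AddMonoidHom.mk' (fun u => AddMonoidHom.mk'
          (fun v => (u : M) ⊗ₜ[R] (v : N))
          (fun v w => by
            show (u : M) ⊗ₜ[R] (((v + w : 𝒩 (-j))) : N) = _
            rw [AddSubgroup.coe_add, TensorProduct.tmul_add]))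
        (fun u w => AddMonoidHom.ext fun v => by
          show ((u : M) + (w : M)) ⊗ₜ[R] (v : N) = _
          rw [TensorProduct.add_tmul]; rfl))
      (fun a u v => by
        show ((a : R) • (u : M)) ⊗ₜ[R] (v : N) = (u : M) ⊗ₜ[R] ((a : R) • (v : N))
        rw [TensorProduct.smul_tmul])
  have κ_tmul : ∀ (u : ℳ j) (v : 𝒩 (-j)), κ (u ⊗ₜ v) = (u : M) ⊗ₜ[R] (v : N) :=
    fun u v => rfl
  -- the smul-decomposition lemmas
  have h1 : ∀ (r : R) (u : M), (DirectSum.decompose ℳ (r • u) j : M)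
      = ((DirectSum.decompose 𝒜 r 0 : R)) • (DirectSum.decompose ℳ u j : M) := by
    intro r u
    have h := decompose_bilin_aux 𝒜 ℳ ℳ (smulAddHom R M) 0 j hconn hM
      (fun p q x y hx hy => by
        have := SetLike.GradedSMul.smul_mem hx hy
        rwa [vadd_eq_add] at this) r u
    rwa [zero_add] at h
  have h2 : ∀ (r : R) (v : N), (DirectSum.decompose 𝒩 (r • v) (-j) : N)
      = ((DirectSum.decompose 𝒜 r 0 : R)) • (DirectSum.decompose 𝒩 v (-j) : N) := by
    intro r v
    have h := decompose_bilin_aux 𝒜 𝒩 𝒩 (smulAddHom R N) 0 (-j) hconn hN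
      (fun p q x y hx hy => by
        have := SetLike.GradedSMul.smul_mem hx hy
        rwa [vadd_eq_add] at this) r v
    rwa [zero_add] at h
  -- the retraction
  let P : M ⊗[R] N →+ (ℳ j) ⊗[𝒜 0] (𝒩 (-j)) :=
    TensorProduct.liftAddHom
      (AddMonoidHom.mk' (fun u => AddMonoidHom.mk'
          (fun v => (DirectSum.decompose ℳ u j) ⊗ₜ[𝒜 0] (DirectSum.decompose 𝒩 v (-j)))
          (fun v w => by
            show (DirectSum.decompose ℳ u j) ⊗ₜ[𝒜 0] (DirectSum.decompose 𝒩 (v + w) (-j)) = _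
            rw [DirectSum.decompose_add, DirectSum.add_apply, TensorProduct.tmul_add]))
        (fun u w => AddMonoidHom.ext fun v => by
          show (DirectSum.decompose ℳ (u + w) j) ⊗ₜ[𝒜 0] (DirectSum.decompose 𝒩 v (-j)) = _
          rw [DirectSum.decompose_add, DirectSum.add_apply, TensorProduct.add_tmul]; rfl))
      (fun r u v => by
        show (DirectSum.decompose ℳ (r • u) j) ⊗ₜ[𝒜 0] (DirectSum.decompose 𝒩 v (-j))
          = (DirectSum.decompose ℳ u j) ⊗ₜ[𝒜 0] (DirectSum.decompose 𝒩 (r • v) (-j))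
        have e1 : DirectSum.decompose ℳ (r • u) j
            = (DirectSum.decompose 𝒜 r 0) • (DirectSum.decompose ℳ u j) :=
          Subtype.ext (h1 r u)
        have e2 : DirectSum.decompose 𝒩 (r • v) (-j)
            = (DirectSum.decompose 𝒜 r 0) • (DirectSum.decompose 𝒩 v (-j)) :=
          Subtype.ext (h2 r v)
        rw [e1, e2, TensorProduct.smul_tmul])
  have P_tmul : ∀ (u : M) (v : N), P (u ⊗ₜ[R] v)
      = (DirectSum.decompose ℳ u j) ⊗ₜ[𝒜 0] (DirectSum.decompose 𝒩 v (-j)) :=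
    fun u v => rfl
  -- P is a retraction of κ
  have hPκ : ∀ t : (ℳ j) ⊗[𝒜 0] (𝒩 (-j)), P (κ t) = t := by
    intro t
    induction t with
    | zero => simp
    | tmul u v =>
      rw [κ_tmul, P_tmul]
      congr 1
      · exact Subtype.ext (DirectSum.decompose_of_mem_same ℳ u.2)
      · exact Subtype.ext (DirectSum.decompose_of_mem_same 𝒩 v.2)
    | add a b ha hb => rw [map_add, map_add, ha, hb]
  -- lift φ ∘ κ = ψ
  have hψκ : ∀ t : (ℳ j) ⊗[𝒜 0] (𝒩 (-j)),
      TensorProduct.lift φ (κ t) = ((ψ t : 𝒜 0) : R) := by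
    intro t
    induction t with
    | zero => simp
    | tmul u v => rw [κ_tmul, ψ_tmul]; exact TensorProduct.lift.tmul _ _
    | add a b ha hb =>
      rw [map_add, map_add, ha, hb, map_add, AddSubgroup.coe_add]
  -- injectivity
  have hinj : Function.Injective ψ := by
    rw [injective_iff_map_eq_zero]
    intro t ht
    have h0 : TensorProduct.lift φ (κ t) = 0 := by
      rw [hψκ t, ht]
      exact ZeroMemClass.coe_zero _
    have hκ0 : κ t = 0 := hφ.1 (by rw [h0, map_zero])
    rw [← hPκ t, hκ0, map_zero]
  -- surjectivity
  have hrange : ∀ z : M ⊗[R] N,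
      (DirectSum.decompose 𝒜 (TensorProduct.lift φ z) 0) ∈ LinearMap.range ψ := by
    intro z
    induction z with
    | zero => rw [map_zero]; simp
    | tmul u v =>
      refine ⟨(DirectSum.decompose ℳ u j) ⊗ₜ[𝒜 0] (DirectSum.decompose 𝒩 v (-j)),
        Subtype.ext ?_⟩
      rw [ψ_tmul, TensorProduct.lift.tmul]
      have h := decompose_bilin_aux ℳ 𝒩 𝒜
        (AddMonoidHom.mk' (fun u => (φ u).toAddMonoidHom)
          (fun u w => AddMonoidHom.ext fun v => by simp [map_add]))
        j (-j) hM hN (fun p q x y hx hy => hgraded p q x y hx hy) u v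
      rw [add_neg_cancel] at h
      exact h.symm
    | add a b ha hb =>
      rw [map_add, DirectSum.decompose_add]
      exact add_mem ha hb
  have hsurj : Function.Surjective ψ := by
    intro a
    obtain ⟨z, hz⟩ := hφ.2 (a : R)
    have h := hrange z
    rw [hz] at h
    have ha : DirectSum.decompose 𝒜 ((a : R)) 0 = a :=
      Subtype.ext (DirectSum.decompose_of_mem_same 𝒜 a.2)
    rwa [ha] at h
  exact ⟨LinearEquiv.ofBijective ψ ⟨hinj, hsurj⟩⟩
end
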